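/- arXiv:2201.10529 — 8 statements merged into one kernel-verified Lean document; each statement's English description precedes it below -/
import Mathlib

section
/- Let n ≥ 2, β ∈ ℝ^n with 0 < β_1 < β_2 < ... < β_n, and c ∈ ℝ^n with c_1 > c_2 > ... > c_n ≥ 0; set c̃_i = c_i - c_n. Suppose the strict concavity-type condition (c_i - c_{i+1})/(β_{i+1} - β_i) > (c_{i+1} - c_{i+2})/(β_{i+2} - β_{i+1}) holds for all 1 ≤ i ≤ n-2. Then for every c* with c̃_{i*+1} < c* < c̃_{i*} for some 1 ≤ i* ≤ n-1, the optimization problem min { β'x : c̃'x ≤ c*, x ∈ 𝕏 } over the standard simplex 𝕏 has a unique minimizer x*, given by x*_{i*} = (c* - c̃_{i*+1})/(c̃_{i*} - c̃_{i*+1}), x*_{i*+1} = 1 - x*_{i*}, and x*_j = 0 for all other j. -/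
open Finset

private lemma chain_down (f : ℕ → ℝ) (a : ℕ) :
    ∀ b, a + 1 ≤ b → (∀ k, a ≤ k → k + 1 ≤ b → f (k+1) < f k) → f b < f a := by
  intro b hb
  induction b, hb using Nat.le_induction with
  | base => intro h; exact h a le_rfl le_rfl
  | succ b hb ih =>
    intro h
    have h1 : f (b+1) < f b := h b (by omega) le_rfl
    exact h1.trans (ih fun k hk hk' => h k hk (by omega))


/-- Case I — unique minimizer of min { β'x : c̃'x ≤ c*, x ∈ 𝕏 }. -/
theorem stmt0 (n : ℕ) (hn : 2 ≤ n) (β c : ℕ → ℝ)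
    (hβpos : 0 < β 0)
    (hβmono : ∀ i, i + 1 < n → β i < β (i + 1))
    (hcmono : ∀ i, i + 1 < n → c (i + 1) < c i)
    (hcn : 0 ≤ c (n - 1))
    (hconc : ∀ i, i + 2 < n →
      (c (i + 1) - c (i + 2)) / (β (i + 2) - β (i + 1)) <
      (c i - c (i + 1)) / (β (i + 1) - β i))
    (cstar : ℝ) (istar : ℕ) (histar : istar + 1 < n)
    (hlt : c (istar + 1) - c (n - 1) < cstar)
    (hgt : cstar < c istar - c (n - 1))
    (xstar : Fin n → ℝ)
    (hxstar : ∀ i : Fin n, xstar i =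
      if i.val = istar then
        (cstar - (c (istar + 1) - c (n - 1))) /
          ((c istar - c (n - 1)) - (c (istar + 1) - c (n - 1)))
      else if i.val = istar + 1 then
        1 - (cstar - (c (istar + 1) - c (n - 1))) /
          ((c istar - c (n - 1)) - (c (istar + 1) - c (n - 1)))
      else 0) :
    ((∀ i, 0 ≤ xstar i ∧ xstar i ≤ 1) ∧ ∑ i, xstar i = 1) ∧
    (∑ i : Fin n, (c i.val - c (n - 1)) * xstar i ≤ cstar) ∧
    (∀ x : Fin n → ℝ, ((∀ i, 0 ≤ x i ∧ x i ≤ 1) ∧ ∑ i, x i = 1) →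
      (∑ i : Fin n, (c i.val - c (n - 1)) * x i ≤ cstar) →
      ∑ i : Fin n, β i.val * xstar i ≤ ∑ i : Fin n, β i.val * x i) ∧
    (∀ x : Fin n → ℝ, ((∀ i, 0 ≤ x i ∧ x i ≤ 1) ∧ ∑ i, x i = 1) →
      (∑ i : Fin n, (c i.val - c (n - 1)) * x i ≤ cstar) →
      x ≠ xstar →
      ∑ i : Fin n, β i.val * xstar i < ∑ i : Fin n, β i.val * x i) := by
  have hi1 : istar < n := by omega
  -- basic positivity
  have he : ∀ i, i + 1 < n → 0 < c i - c (i+1) := fun i h => sub_pos.2 (hcmono i h)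
  have hd : ∀ i, i + 1 < n → 0 < β (i+1) - β i := fun i h => sub_pos.2 (hβmono i h)
  set lam : ℝ := (β (istar+1) - β istar) / (c istar - c (istar+1)) with hlam
  have hlampos : 0 < lam := div_pos (hd _ histar) (he _ histar)
  -- slopes decreasing
  set s : ℕ → ℝ := fun i => (c i - c (i+1)) / (β (i+1) - β i) with hs
  have hsdec : ∀ i j, i < j → j + 1 < n → s j < s i := by
    intro i j hij hj
    exact chain_down s i j hij (fun k hk hk' => hconc k (by omega))
  -- the dual functional
  set φ : ℕ → ℝ := fun i => β i + lam * (c i - c (n-1)) with hφ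
  have hφeq : φ (istar+1) = φ istar := by
    have hne : (c istar - c (istar+1)) ≠ 0 := (he _ histar).ne'
    simp only [hφ, hlam]
    field_simp
    ring
  have hstepdown : ∀ k, k + 1 ≤ istar → φ (k+1) < φ k := by
    intro k hk
    have hkn : k + 1 < n := by omega
    have hslt : s istar < s k := hsdec k istar (by omega) histar
    rw [hs] at hslt
    simp only at hslt
    have h1 : (c istar - c (istar+1)) * (β (k+1) - β k) <
        (c k - c (k+1)) * (β (istar+1) - β istar) :=
      (div_lt_div_iff₀ (hd _ histar) (hd _ hkn)).1 hslt
    have h2 : β (k+1) - β k < lam * c k - lam * c (k+1) := by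
      rw [← mul_sub, hlam, div_mul_eq_mul_div, lt_div_iff₀ (he _ histar)]
      linarith [h1]
    simp only [hφ, mul_sub]
    linarith
  have hstepup : ∀ k, istar + 1 ≤ k → k + 1 < n → φ k < φ (k+1) := by
    intro k hk hkn
    have hslt : s k < s istar := hsdec istar k (by omega) hkn
    rw [hs] at hslt
    simp only at hslt
    have h1 : (c k - c (k+1)) * (β (istar+1) - β istar) <
        (c istar - c (istar+1)) * (β (k+1) - β k) :=
      (div_lt_div_iff₀ (hd _ hkn) (hd _ histar)).1 hslt
    have h2 : lam * c k - lam * c (k+1) < β (k+1) - β k := by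
      rw [← mul_sub, hlam, div_mul_eq_mul_div, div_lt_iff₀ (he _ histar)]
      linarith [h1]
    simp only [hφ, mul_sub]
    linarith
  have hφgt : ∀ i, i < n → i ≠ istar → i ≠ istar + 1 → φ istar < φ i := by
    intro i hi h1 h2
    rcases lt_or_gt_of_ne h1 with h | h
    · exact chain_down φ i istar h (fun k hk hk' => hstepdown k hk')
    · have h' : istar + 1 < i := by omega
      have := chain_down (fun k => -φ k) (istar+1) i h'
        (fun k hk hk' => by simpa using hstepup k hk (by omega))
      simp only [neg_lt_neg_iff] at this
      calc φ istar = φ (istar+1) := hφeq.symm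
        _ < φ i := this
  have hφge : ∀ i, i < n → φ istar ≤ φ i := by
    intro i hi
    by_cases h1 : i = istar
    · rw [h1]
    by_cases h2 : i = istar + 1
    · rw [h2, hφeq]
    exact le_of_lt (hφgt i hi h1 h2)
  -- the two support points
  set a : Fin n := ⟨istar, hi1⟩ with ha
  set b : Fin n := ⟨istar+1, histar⟩ with hb
  have hab : a ≠ b := by
    intro h
    have : istar = istar + 1 := congrArg Fin.val h
    omega
  set t : ℝ := (cstar - (c (istar + 1) - c (n - 1))) /
      ((c istar - c (n - 1)) - (c (istar + 1) - c (n - 1))) with ht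
  have hden : (0:ℝ) < (c istar - c (n - 1)) - (c (istar + 1) - c (n - 1)) := by
    have := he istar histar; linarith
  have ht0 : 0 < t := div_pos (by linarith) hden
  have ht1 : t < 1 := (div_lt_one hden).2 (by linarith)
  have httc : t * ((c istar - c (n-1)) - (c (istar+1) - c (n-1))) =
      cstar - (c (istar+1) - c (n-1)) := by
    rw [ht]; exact div_mul_cancel₀ _ (ne_of_gt hden)
  have hxa : xstar a = t := by rw [hxstar a]; simp [ha, ht]
  have hxb : xstar b = 1 - t := by
    rw [hxstar b]
    have : (istar+1 : ℕ) ≠ istar := by omega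
    simp [hb, ht, this]
  have hxo : ∀ j : Fin n, j ≠ a → j ≠ b → xstar j = 0 := by
    intro j hja hjb
    rw [hxstar j]
    have h1 : j.val ≠ istar := fun h => hja (Fin.ext h)
    have h2 : j.val ≠ istar + 1 := fun h => hjb (Fin.ext h)
    simp [h1, h2]
  -- generic two-point sums
  have hsum2 : ∀ (g : ℕ → ℝ) (x : Fin n → ℝ), (∀ j : Fin n, j ≠ a → j ≠ b → x j = 0) →
      ∑ i : Fin n, g i.val * x i = g istar * x a + g (istar+1) * x b := by
    intro g x hx
    exact Finset.sum_eq_add_of_mem a b (mem_univ a) (mem_univ b) hab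
      (fun j _ hj => by rw [hx j hj.1 hj.2, mul_zero])
  -- key identity
  have key : ∀ x : Fin n → ℝ, (∑ i : Fin n, φ i.val * x i) =
      (∑ i : Fin n, β i.val * x i) + lam * ∑ i : Fin n, (c i.val - c (n-1)) * x i := by
    intro x
    rw [Finset.mul_sum, ← Finset.sum_add_distrib]
    refine Finset.sum_congr rfl fun i _ => ?_
    simp only [hφ]
    ring
  -- properties of xstar
  have hx01 : ∀ i, 0 ≤ xstar i ∧ xstar i ≤ 1 := by
    intro i
    rw [hxstar i]
    split_ifs <;> constructor <;> linarith
  have hxsum : ∑ i, xstar i = 1 := by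
    rw [Finset.sum_eq_add_of_mem a b (mem_univ a) (mem_univ b) hab
      (fun j _ hj => hxo j hj.1 hj.2), hxa, hxb]
    ring
  have hceq : ∑ i : Fin n, (c i.val - c (n-1)) * xstar i = cstar := by
    have h := hsum2 (fun i => c i - c (n-1)) xstar hxo
    rw [h, hxa, hxb]
    linear_combination httc
  have hφxstar : ∑ i : Fin n, φ i.val * xstar i = φ istar := by
    rw [hsum2 φ xstar hxo, hxa, hxb, hφeq]
    ring
  have hβxstar : ∑ i : Fin n, β i.val * xstar i = φ istar - lam * cstar := by
    have := key xstar
    rw [hφxstar, hceq] at this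
    linarith
  -- lower bound for feasible x
  have hφlow : ∀ x : Fin n → ℝ, (∀ i, 0 ≤ x i ∧ x i ≤ 1) → (∑ i, x i = 1) →
      φ istar ≤ ∑ i : Fin n, φ i.val * x i := by
    intro x hx h1
    calc φ istar = ∑ i : Fin n, φ istar * x i := by
          rw [← Finset.mul_sum, h1, mul_one]
      _ ≤ ∑ i : Fin n, φ i.val * x i :=
          Finset.sum_le_sum fun i _ =>
            mul_le_mul_of_nonneg_right (hφge i.val i.isLt) (hx i).1
  clear_value lam s φ t
  refine ⟨⟨hx01, hxsum⟩, le_of_eq hceq, ?_, ?_⟩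
  · intro x ⟨hx, hxs⟩ hfeas
    have h1 := hφlow x hx hxs
    have h2 := key x
    have h3 : lam * ∑ i : Fin n, (c i.val - c (n-1)) * x i ≤ lam * cstar :=
      mul_le_mul_of_nonneg_left hfeas (le_of_lt hlampos)
    rw [hβxstar]
    linarith
  · intro x ⟨hx, hxs⟩ hfeas hne
    have h2 := key x
    rw [hβxstar]
    by_cases hsupp : ∀ j : Fin n, j ≠ a → j ≠ b → x j = 0
    · -- supported on {a,b}
      have hab1 : x a + x b = 1 := by
        rw [← hxs, Finset.sum_eq_add_of_mem a b (mem_univ a) (mem_univ b) hab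
          (fun j _ hj => hsupp j hj.1 hj.2)]
      have hcx : ∑ i : Fin n, (c i.val - c (n-1)) * x i =
          (c istar - c (n-1)) * x a + (c (istar+1) - c (n-1)) * x b := by
        have h := hsum2 (fun i => c i - c (n-1)) x hsupp
        simpa using h
      have hune : x a ≠ t := by
        intro hu
        apply hne
        funext j
        by_cases hja : j = a
        · rw [hja, hu, hxa]
        by_cases hjb : j = b
        · rw [hjb, hxb]; linarith
        · rw [hsupp j hja hjb, hxo j hja hjb]
      -- cstar in terms of t
      have hb1 : x b = 1 - x a := by linarith
      have hkey : (∑ i : Fin n, (c i.val - c (n-1)) * x i) - cstar =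
          (x a - t) * ((c istar - c (n-1)) - (c (istar+1) - c (n-1))) := by
        rw [hcx, hb1]
        linear_combination httc
      have h5 : x a - t < 0 := by
        rcases lt_or_gt_of_ne (sub_ne_zero.2 hune) with h | h
        · exact h
        · exfalso
          have := mul_pos h hden
          nlinarith [hfeas, hkey]
      have hstrict : ∑ i : Fin n, (c i.val - c (n-1)) * x i < cstar := by
        have := mul_pos (neg_pos.2 h5) hden
        nlinarith [hkey]
      have h1 := hφlow x hx hxs
      have h4 : lam * ∑ i : Fin n, (c i.val - c (n-1)) * x i < lam * cstar :=
        mul_lt_mul_of_pos_left hstrict hlampos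
      linarith
    · -- some mass outside {a,b}
      push_neg at hsupp
      obtain ⟨j, hja, hjb, hjne⟩ := hsupp
      have hjpos : 0 < x j := lt_of_le_of_ne (hx j).1 (Ne.symm hjne)
      have hj1 : j.val ≠ istar := fun h => hja (Fin.ext h)
      have hj2 : j.val ≠ istar + 1 := fun h => hjb (Fin.ext h)
      have hφj : φ istar < φ j.val := hφgt j.val j.isLt hj1 hj2
      have h1 : φ istar < ∑ i : Fin n, φ i.val * x i := by
        calc φ istar = ∑ i : Fin n, φ istar * x i := by
              rw [← Finset.mul_sum, hxs, mul_one]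
          _ < ∑ i : Fin n, φ i.val * x i :=
              Finset.sum_lt_sum
                (fun i _ => mul_le_mul_of_nonneg_right (hφge i.val i.isLt) (hx i).1)
                ⟨j, mem_univ j, mul_lt_mul_of_pos_right hφj hjpos⟩
      have h3 : lam * ∑ i : Fin n, (c i.val - c (n-1)) * x i ≤ lam * cstar :=
        mul_le_mul_of_nonneg_left hfeas (le_of_lt hlampos)
      linarith
end

section
/- With the hypotheses of the previous setup (strictly increasing β, strictly decreasing c, and the condition (c_i - c_{i+1})/(β_{i+1} - β_i) > (c_{i+1} - c_{i+2})/(β_{i+2} - β_{i+1}) for 1 ≤ i ≤ n-2), if c* = c̃_{i*} for some 1 ≤ i* ≤ n-1 (with n ≥ 3), then the unique minimizer of min { β'x : c̃'x ≤ c*, x ∈ 𝕏 } is the vertex x* = e_{i*} (the i*-th standard basis vector), and the optimal value β* equals β_{i*}. -/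
/-!
The rates `(β (i + 1) - β i) / (c i - c (i + 1))` increase with `i`, so the points `(c k, β k)` are
the vertices of a convex polygon. Taking `μ` strictly between the rates of the two edges at `i*`,
the line of slope `-μ` through `(c i*, β i*)` has every other vertex strictly above it: `β + μ c` is
uniquely minimized at `i*`. For `x` in the simplex with `c̃'x ≤ c̃ i*` this gives
`β'x - β i* ≥ ∑ k, (β k + μ c k - β i* - μ c i*) x k ≥ 0`, with equality only at `x = e i*`.
-/

open Finset

/-- Minus the slope of the segment from `(c i, β i)` to `(c (i + 1), β (i + 1))`. -/
noncomputable def marginalRate (β c : ℕ → ℝ) (i : ℕ) : ℝ := (β (i + 1) - β i) / (c i - c (i + 1))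

section Slope

variable {β c : ℕ → ℝ} {n : ℕ}

lemma marginalRate_pos {i : ℕ} (hβ : β i < β (i + 1)) (hc : c (i + 1) < c i) :
    0 < marginalRate β c i :=
  div_pos (sub_pos.2 hβ) (sub_pos.2 hc)

lemma add_mul_lt_add_mul_succ_iff {i : ℕ} (hc : c (i + 1) < c i) (μ : ℝ) :
    β i + μ * c i < β (i + 1) + μ * c (i + 1) ↔ μ < marginalRate β c i := by
  rw [marginalRate, lt_div_iff₀ (sub_pos.2 hc)]
  constructor <;> intro h <;> linarith

lemma add_mul_succ_lt_add_mul_iff {i : ℕ} (hc : c (i + 1) < c i) (μ : ℝ) :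
    β (i + 1) + μ * c (i + 1) < β i + μ * c i ↔ marginalRate β c i < μ := by
  rw [marginalRate, div_lt_iff₀ (sub_pos.2 hc)]
  constructor <;> intro h <;> linarith

lemma strictMonoOn_marginalRate
    (hβmono : ∀ i, i + 1 < n → β i < β (i + 1))
    (hcmono : ∀ i, i + 1 < n → c (i + 1) < c i)
    (hconc : ∀ i, i + 2 < n →
      (c (i + 1) - c (i + 2)) / (β (i + 2) - β (i + 1)) <
      (c i - c (i + 1)) / (β (i + 1) - β i)) :
    StrictMonoOn (marginalRate β c) (Set.Iio (n - 1)) := by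
  refine strictMonoOn_of_lt_succ Set.ordConnected_Iio fun i _ _ hi1 => ?_
  simp only [Order.succ_eq_add_one, Set.mem_Iio] at hi1 ⊢
  have h := hconc i (by omega)
  rw [← inv_div, ← inv_div (β (i + 1) - β i)] at h
  exact (inv_lt_inv₀ (marginalRate_pos (hβmono _ (by omega)) (hcmono _ (by omega)))
    (marginalRate_pos (hβmono _ (by omega)) (hcmono _ (by omega)))).1 h

lemma exists_pos_add_mul_lt_add_mul
    (hβmono : ∀ i, i + 1 < n → β i < β (i + 1))
    (hcmono : ∀ i, i + 1 < n → c (i + 1) < c i)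
    (hconc : ∀ i, i + 2 < n →
      (c (i + 1) - c (i + 2)) / (β (i + 2) - β (i + 1)) <
      (c i - c (i + 1)) / (β (i + 1) - β i))
    {m : ℕ} (hm₀ : 1 ≤ m) (hm : m + 1 < n) :
    ∃ μ > 0, ∀ k < n, k ≠ m → β m + μ * c m < β k + μ * c k := by
  have hrate := strictMonoOn_marginalRate hβmono hcmono hconc
  have hrate_m : marginalRate β c (m - 1) < marginalRate β c m :=
    hrate (Set.mem_Iio.2 (by omega)) (Set.mem_Iio.2 (by omega)) (by omega)
  have hpos : 0 < marginalRate β c (m - 1) :=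
    marginalRate_pos (hβmono _ (by omega)) (hcmono _ (by omega))
  obtain ⟨μ, hlo, hhi⟩ := exists_between hrate_m
  have hanti : StrictAntiOn (fun k => β k + μ * c k) (Set.Iic m) := by
    refine strictAntiOn_Iic_of_succ_lt fun k hk => ?_
    refine (add_mul_succ_lt_add_mul_iff (hcmono k (by omega)) μ).2 ?_
    calc marginalRate β c k ≤ marginalRate β c (m - 1) :=
          hrate.monotoneOn (Set.mem_Iio.2 (by omega)) (Set.mem_Iio.2 (by omega))
            (by omega)
      _ < μ := hlo
  have hmono : StrictMonoOn (fun k => β k + μ * c k) (Set.Icc m (n - 1)) := by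
    refine strictMonoOn_of_lt_succ Set.ordConnected_Icc fun k _ hk hk1 => ?_
    simp only [Order.succ_eq_add_one, Set.mem_Icc] at hk hk1 ⊢
    refine (add_mul_lt_add_mul_succ_iff (hcmono k (by omega)) μ).2 ?_
    calc μ < marginalRate β c m := hhi
      _ ≤ marginalRate β c k :=
          hrate.monotoneOn (Set.mem_Iio.2 (by omega)) (Set.mem_Iio.2 (by omega))
            hk.1
  refine ⟨μ, hpos.trans hlo, fun k hk hne => ?_⟩
  rcases hne.lt_or_gt with h | h
  · exact hanti (Set.mem_Iic.2 h.le) (Set.mem_Iic.2 le_rfl) h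
  · exact hmono ⟨le_rfl, by omega⟩ ⟨h.le, by omega⟩ h

end Slope

section Lagrangian

variable {ι : Type*} [Fintype ι] {β c x : ι → ℝ} {μ : ℝ} {m : ι}

lemma sum_lagrangian_gap_le (hμ : 0 ≤ μ) (hx : ∑ i, x i = 1) (hc : ∑ i, c i * x i ≤ c m) :
    ∑ i, (β i + μ * c i - (β m + μ * c m)) * x i ≤ ∑ i, β i * x i - β m := by
  have hsum : ∑ i, (β i + μ * c i - (β m + μ * c m)) * x i
      = ∑ i, β i * x i + μ * ∑ i, c i * x i - (β m + μ * c m) * ∑ i, x i := by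
    simp only [sub_mul, add_mul, sum_sub_distrib, sum_add_distrib, mul_sum, mul_assoc]
  rw [hsum, hx]
  nlinarith

lemma le_sum_mul_of_lagrangian (hμ : 0 ≤ μ) (hmin : ∀ i, β m + μ * c m ≤ β i + μ * c i)
    (hx₀ : ∀ i, 0 ≤ x i) (hx : ∑ i, x i = 1) (hc : ∑ i, c i * x i ≤ c m) :
    β m ≤ ∑ i, β i * x i := by
  have := sum_nonneg fun i (_ : i ∈ univ) => mul_nonneg (sub_nonneg.2 (hmin i)) (hx₀ i)
  linarith [sum_lagrangian_gap_le (β := β) hμ hx hc]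

lemma lt_sum_mul_of_lagrangian (hμ : 0 ≤ μ) (hmin : ∀ i, β m + μ * c m ≤ β i + μ * c i)
    (hx₀ : ∀ i, 0 ≤ x i) (hx : ∑ i, x i = 1) (hc : ∑ i, c i * x i ≤ c m) {j : ι}
    (hj : β m + μ * c m < β j + μ * c j) (hxj : 0 < x j) :
    β m < ∑ i, β i * x i := by
  have := sum_pos' (fun i (_ : i ∈ univ) => mul_nonneg (sub_nonneg.2 (hmin i)) (hx₀ i))
    ⟨j, mem_univ j, mul_pos (sub_pos.2 hj) hxj⟩
  linarith [sum_lagrangian_gap_le (β := β) hμ hx hc]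

end Lagrangian

lemma exists_ne_pos_of_ne_single {ι : Type*} [Fintype ι] [DecidableEq ι] {x : ι → ℝ} {m : ι}
    (hx₀ : ∀ i, 0 ≤ x i) (hx : ∑ i, x i = 1) (hne : x ≠ Pi.single m 1) :
    ∃ j ≠ m, 0 < x j := by
  by_contra! h
  have hzero : ∀ j ≠ m, x j = 0 := fun j hj => le_antisymm (h j hj) (hx₀ j)
  rw [sum_eq_single m (fun j _ hj => hzero j hj) (by simp)] at hx
  refine hne (funext fun j => ?_)
  rcases eq_or_ne j m with rfl | hj
  · simpa using hx
  · simp [hzero j hj, hj]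

theorem stmt1_general (n : ℕ) (β c : ℕ → ℝ)
    (hβmono : ∀ i, i + 1 < n → β i < β (i + 1))
    (hcmono : ∀ i, i + 1 < n → c (i + 1) < c i)
    (hconc : ∀ i, i + 2 < n →
      (c (i + 1) - c (i + 2)) / (β (i + 2) - β (i + 1)) <
      (c i - c (i + 1)) / (β (i + 1) - β i))
    (cstar : ℝ) (istar : ℕ) (histar₀ : 1 ≤ istar) (histar : istar + 1 < n)
    (hcs : cstar = c istar - c (n - 1))
    (xstar : Fin n → ℝ)
    (hxstar : ∀ i : Fin n, xstar i = if i.val = istar then 1 else 0) :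
    ((∀ i, 0 ≤ xstar i ∧ xstar i ≤ 1) ∧ ∑ i, xstar i = 1) ∧
    (∑ i : Fin n, (c i.val - c (n - 1)) * xstar i ≤ cstar) ∧
    (∑ i : Fin n, β i.val * xstar i = β istar) ∧
    (∀ x : Fin n → ℝ, ((∀ i, 0 ≤ x i ∧ x i ≤ 1) ∧ ∑ i, x i = 1) →
      (∑ i : Fin n, (c i.val - c (n - 1)) * x i ≤ cstar) →
      β istar ≤ ∑ i : Fin n, β i.val * x i) ∧
    (∀ x : Fin n → ℝ, ((∀ i, 0 ≤ x i ∧ x i ≤ 1) ∧ ∑ i, x i = 1) →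
      (∑ i : Fin n, (c i.val - c (n - 1)) * x i ≤ cstar) →
      x ≠ xstar →
      β istar < ∑ i : Fin n, β i.val * x i) := by
  set m : Fin n := ⟨istar, by omega⟩
  obtain rfl : xstar = Pi.single m 1 :=
    funext fun i => by simp [hxstar, Pi.single_apply, m, Fin.ext_iff]
  subst hcs
  obtain ⟨μ, hμ, hmin⟩ := exists_pos_add_mul_lt_add_mul hβmono hcmono hconc histar₀ histar
  set β' : Fin n → ℝ := fun i => β i
  set c' : Fin n → ℝ := fun i => c i - c (n - 1)
  have hlt : ∀ i ≠ m, β' m + μ * c' m < β' i + μ * c' i := fun i hi => by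
    simp only [β', c']
    linarith [hmin i i.isLt (Fin.val_ne_iff.2 hi)]
  have hle i : β' m + μ * c' m ≤ β' i + μ * c' i := by
    rcases eq_or_ne i m with rfl | hi
    exacts [le_rfl, (hlt i hi).le]
  refine ⟨⟨fun i => ?_, by simp⟩, by simp [Pi.single_apply, m], by simp [Pi.single_apply, m],
    fun x hx hc => ?_, fun x hx hc hne => ?_⟩
  · rw [Pi.single_apply]; split_ifs <;> norm_num
  · exact le_sum_mul_of_lagrangian hμ.le hle (fun i => (hx.1 i).1) hx.2 hc
  · obtain ⟨j, hj, hxj⟩ := exists_ne_pos_of_ne_single (fun i => (hx.1 i).1) hx.2 hne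
    exact lt_sum_mul_of_lagrangian hμ.le hle (fun i => (hx.1 i).1) hx.2 hc (hlt j hj) hxj

/-- Case II — when c* = c̃_{i*}, the unique minimizer is the vertex
e_{i*} and the optimal value is β_{i*}. -/
theorem stmt1 (n : ℕ) (hn : 3 ≤ n) (β c : ℕ → ℝ)
    (hβpos : 0 < β 0)
    (hβmono : ∀ i, i + 1 < n → β i < β (i + 1))
    (hcmono : ∀ i, i + 1 < n → c (i + 1) < c i)
    (hcn : 0 ≤ c (n - 1))
    (hconc : ∀ i, i + 2 < n →
      (c (i + 1) - c (i + 2)) / (β (i + 2) - β (i + 1)) <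
      (c i - c (i + 1)) / (β (i + 1) - β i))
    (cstar : ℝ) (istar : ℕ) (histar₀ : 1 ≤ istar) (histar : istar + 1 < n)
    (hcs : cstar = c istar - c (n - 1))
    (xstar : Fin n → ℝ)
    (hxstar : ∀ i : Fin n, xstar i = if i.val = istar then 1 else 0) :
    ((∀ i, 0 ≤ xstar i ∧ xstar i ≤ 1) ∧ ∑ i, xstar i = 1) ∧
    (∑ i : Fin n, (c i.val - c (n - 1)) * xstar i ≤ cstar) ∧
    (∑ i : Fin n, β i.val * xstar i = β istar) ∧
    (∀ x : Fin n → ℝ, ((∀ i, 0 ≤ x i ∧ x i ≤ 1) ∧ ∑ i, x i = 1) →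
      (∑ i : Fin n, (c i.val - c (n - 1)) * x i ≤ cstar) →
      β istar ≤ ∑ i : Fin n, β i.val * x i) ∧
    (∀ x : Fin n → ℝ, ((∀ i, 0 ≤ x i ∧ x i ≤ 1) ∧ ∑ i, x i = 1) →
      (∑ i : Fin n, (c i.val - c (n - 1)) * x i ≤ cstar) →
      x ≠ xstar →
      β istar < ∑ i : Fin n, β i.val * x i) :=
  stmt1_general n β c hβmono hcmono hconc cstar istar histar₀ histar hcs xstar hxstar
end

section
/- Define sS(𝒾, 𝓇, 𝒷) := (𝒾 - Î(𝒷)) + Î(𝒷)·ln(Î(𝒷)/𝒾) + (1/(2γ))(𝓇 - R̂(𝒷))² + (υ²/2)(𝒷 - β*)², where Î(𝒷) = η(𝒷 - σ) and R̂(𝒷) = (1-η)(𝒷 - σ). Then sS is nonnegative on the set {(𝒾,𝓇,𝒷) : 𝒾 > 0, 𝒷 > σ}, and sS(𝒾,𝓇,𝒷) = 0 if and only if (𝒾, 𝓇, 𝒷) = (𝒾*, 𝓇*, β*) with 𝒾* = η(β* - σ) and 𝓇* = (1-η)(β* - σ). -/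
/-- Key inequality: for a, b > 0, a - b + b * log(b/a) ≥ 0, with equality iff a = b. -/
lemma key_ineq (a b : ℝ) (ha : 0 < a) (hb : 0 < b) :
    0 ≤ (a - b) + b * Real.log (b / a) ∧
    (((a - b) + b * Real.log (b / a) = 0) ↔ a = b) := by
  have hab : 0 < a / b := div_pos ha hb
  have hlog : Real.log (b / a) = - Real.log (a / b) := by
    rw [← Real.log_inv, inv_div]
  have h1 : Real.log (a / b) ≤ a / b - 1 := Real.log_le_sub_one_of_pos hab
  have key : b * Real.log (a / b) ≤ a - b := by
    have := mul_le_mul_of_nonneg_left h1 hb.le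
    calc b * Real.log (a / b) ≤ b * (a / b - 1) := this
      _ = a - b := by field_simp
  constructor
  · nlinarith [key]
  constructor
  · intro h
    by_contra hne
    have hne' : a / b ≠ 1 := by
      intro hh; apply hne; field_simp at hh; linarith
    have h2 : Real.log (a / b) < a / b - 1 := Real.log_lt_sub_one_of_pos hab hne'
    have : b * Real.log (a / b) < a - b := by
      have := mul_lt_mul_of_pos_left h2 hb
      calc b * Real.log (a / b) < b * (a / b - 1) := this
        _ = a - b := by field_simp
    rw [hlog] at h; nlinarith
  · intro h; subst h
    rw [div_self ha.ne', Real.log_one]; ring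

/-- nonnegativity of the SIRS Lyapunov term sS and characterization
of its zero set. -/
theorem stmt5 (γ υ η σ βstar : ℝ) (hγ : 0 < γ) (hυ : 0 < υ)
    (hη₀ : 0 < η) (hη₁ : η < 1) (hσ : 0 < σ) (hβ : σ < βstar)
    (sS : ℝ → ℝ → ℝ → ℝ)
    (hsS : ∀ i r b, sS i r b =
      (i - η * (b - σ)) + η * (b - σ) * Real.log (η * (b - σ) / i) +
      (1 / (2 * γ)) * (r - (1 - η) * (b - σ))^2 + (υ^2 / 2) * (b - βstar)^2) :
    ∀ i r b : ℝ, 0 < i → σ < b →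
      (0 ≤ sS i r b ∧
       (sS i r b = 0 ↔ (i, r, b) = (η * (βstar - σ), (1 - η) * (βstar - σ), βstar))) := by
  intro i r b hi hb
  have hB : 0 < η * (b - σ) := mul_pos hη₀ (by linarith)
  obtain ⟨hpos, hiff⟩ := key_ineq i (η * (b - σ)) hi hB
  have hγ' : 0 < 1 / (2 * γ) := by positivity
  have hυ' : 0 < υ^2 / 2 := by positivity
  have hsq1 : 0 ≤ (r - (1 - η) * (b - σ))^2 := sq_nonneg _
  have hsq2 : 0 ≤ (b - βstar)^2 := sq_nonneg _
  rw [hsS]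
  set L := (i - η * (b - σ)) + η * (b - σ) * Real.log (η * (b - σ) / i) with hL
  clear_value L
  have hn1 : 0 ≤ 1 / (2 * γ) * (r - (1 - η) * (b - σ))^2 := mul_nonneg hγ'.le hsq1
  have hn2 : 0 ≤ υ^2 / 2 * (b - βstar)^2 := mul_nonneg hυ'.le hsq2
  constructor
  · linarith
  constructor
  · intro h
    have ht1 : L = 0 := by linarith
    have ht2 : (r - (1 - η) * (b - σ))^2 = 0 := by
      have : 1 / (2 * γ) * (r - (1 - η) * (b - σ))^2 = 0 := by linarith
      exact (mul_eq_zero.mp this).resolve_left hγ'.ne'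
    have ht3 : (b - βstar)^2 = 0 := by
      have : υ^2 / 2 * (b - βstar)^2 = 0 := by linarith
      exact (mul_eq_zero.mp this).resolve_left hυ'.ne'
    have hbeq : b = βstar := by have := pow_eq_zero_iff (n := 2) (by norm_num) |>.mp ht3; linarith
    have hreq : r = (1 - η) * (b - σ) := by
      have := pow_eq_zero_iff (n := 2) (by norm_num) |>.mp ht2; linarith
    have hieq : i = η * (b - σ) := hiff.mp ht1
    subst hbeq
    simp [hieq, hreq]
  · intro h
    simp only [Prod.mk.injEq] at h
    obtain ⟨h1, h2, h3⟩ := h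
    subst h3
    have hL0 : L = 0 := hiff.mpr h1
    rw [hL0, h2]
    ring
end

section
/- Take n ≥ 3, β strictly increasing, Case II with x* = e_{i*}, β* = β_{i*}, and ρ* ≥ max{β_n - β*, β* - β_1}. Let r° ∈ ℝ^n be defined by r°_i = -ρ* for i with x*_i = 0 and r°_i = 0 for i in the support of x*. Then for every q ∈ [-ρ*/(β* - β_1), ρ*/(β_n - β*)], the unique x in the best-response set M(qβ + r°) := argmax_{x∈𝕏} (qβ + r°)'x satisfying β'x = β* is x = x*; moreover if q > ρ*/(β_n - β*) then M(qβ + r°) = {e_n}, and if q < -ρ*/(β* - β_1) then M(qβ + r°) = {e_1}. -/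
open Finset

/-- Case II best-response characterization of the set 𝔄*. -/
theorem stmt8 (n : ℕ) (hn : 3 ≤ n) (β : Fin n → ℝ) (hβ : StrictMono β)
    (istar : Fin n) (h0 : 0 < istar.val) (h1 : istar.val < n - 1)
    (βstar ρ : ℝ) (hβstar : βstar = β istar)
    (hρ : max (β ⟨n - 1, by omega⟩ - βstar) (βstar - β ⟨0, by omega⟩) ≤ ρ)
    (r : Fin n → ℝ) (hr : ∀ i, r i = if i = istar then 0 else -ρ)
    (simplex : Set (Fin n → ℝ))
    (hsimplex : simplex = {x | (∀ i, 0 ≤ x i ∧ x i ≤ 1) ∧ ∑ i, x i = 1})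
    (M : (Fin n → ℝ) → Set (Fin n → ℝ))
    (hM : ∀ p, M p = {x ∈ simplex | ∀ y ∈ simplex,
      ∑ i, p i * y i ≤ ∑ i, p i * x i}) :
    (∀ q : ℝ, -(ρ / (βstar - β ⟨0, by omega⟩)) ≤ q →
      q ≤ ρ / (β ⟨n - 1, by omega⟩ - βstar) →
      ((fun j => if j = istar then (1 : ℝ) else 0) ∈ M (fun i => q * β i + r i) ∧
       (∑ i, β i * (if i = istar then (1 : ℝ) else 0)) = βstar ∧
       ∀ x ∈ M (fun i => q * β i + r i), (∑ i, β i * x i) = βstar →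
         x = fun j => if j = istar then (1 : ℝ) else 0)) ∧
    (∀ q : ℝ, ρ / (β ⟨n - 1, by omega⟩ - βstar) < q →
      M (fun i => q * β i + r i) =
        {fun j => if j = (⟨n - 1, by omega⟩ : Fin n) then (1 : ℝ) else 0}) ∧
    (∀ q : ℝ, q < -(ρ / (βstar - β ⟨0, by omega⟩)) →
      M (fun i => q * β i + r i) =
        {fun j => if j = (⟨0, by omega⟩ : Fin n) then (1 : ℝ) else 0}) := by
  subst hβstar hsimplex
  set i0 : Fin n := ⟨0, by omega⟩ with hi0def
  set iN : Fin n := ⟨n - 1, by omega⟩ with hiNdef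
  have hlt0 : i0 < istar := by rw [Fin.lt_def]; simpa [hi0def] using h0
  have hltN : istar < iN := by rw [Fin.lt_def]; simp [hiNdef]; omega
  have hb0 : β i0 < β istar := hβ hlt0
  have hbN : β istar < β iN := hβ hltN
  have hρ1 : β iN - β istar ≤ ρ := le_trans (le_max_left _ _) hρ
  have hρ2 : β istar - β i0 ≤ ρ := le_trans (le_max_right _ _) hρ
  have hρpos : 0 < ρ := lt_of_lt_of_le (by linarith) hρ1
  have hmono0 : ∀ i : Fin n, β i0 ≤ β i := fun i =>
    hβ.monotone (by rw [Fin.le_def]; simp [hi0def])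
  have hmonoN : ∀ i : Fin n, β i ≤ β iN := fun i =>
    hβ.monotone (by rw [Fin.le_def]; have := i.isLt; simp [hiNdef]; omega)
  have hval : ∀ (p : Fin n → ℝ) (j : Fin n),
      (∑ i, p i * if i = j then (1 : ℝ) else 0) = p j := by
    intro p j; simp
  have hdelta_mem : ∀ j : Fin n, (fun i => if i = j then (1 : ℝ) else 0) ∈
      {x : Fin n → ℝ | (∀ i, 0 ≤ x i ∧ x i ≤ 1) ∧ ∑ i, x i = 1} := by
    intro j
    refine ⟨fun i => ?_, by simp⟩
    by_cases h : i = j <;> simp [h]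
  have hmemM : ∀ (p : Fin n → ℝ) (j : Fin n), (∀ i, p i ≤ p j) →
      (fun i => if i = j then (1 : ℝ) else 0) ∈ M p := by
    intro p j hj
    rw [hM]
    refine ⟨hdelta_mem j, fun y hy => ?_⟩
    rw [hval]
    obtain ⟨hy1, hy2⟩ := hy
    calc ∑ i, p i * y i ≤ ∑ i, p j * y i :=
          Finset.sum_le_sum fun i _ => mul_le_mul_of_nonneg_right (hj i) (hy1 i).1
      _ = p j := by rw [← Finset.mul_sum, hy2, mul_one]
  have hzero : ∀ (p : Fin n → ℝ) (j : Fin n), (∀ i, p i ≤ p j) →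
      ∀ x ∈ M p, ∀ k, p k < p j → x k = 0 := by
    intro p j hj x hx k hk
    rw [hM] at hx
    obtain ⟨⟨hx1, hx2⟩, hopt⟩ := hx
    have h1 : p j ≤ ∑ i, p i * x i := by
      have := hopt _ (hdelta_mem j)
      rwa [hval] at this
    have h2 : (p j - p k) * x k ≤ ∑ i, (p j - p i) * x i :=
      Finset.single_le_sum (f := fun i => (p j - p i) * x i)
        (fun i _ => mul_nonneg (by linarith [hj i]) (hx1 i).1) (Finset.mem_univ k)
    have h3 : ∑ i, (p j - p i) * x i = p j - ∑ i, p i * x i := by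
      rw [Finset.sum_congr rfl (fun i _ => sub_mul (p j) (p i) (x i)),
        Finset.sum_sub_distrib, ← Finset.mul_sum, hx2, mul_one]
    have h4 : (p j - p k) * x k ≤ 0 := by linarith
    have h5 : 0 ≤ x k := (hx1 k).1
    nlinarith
  have hext : ∀ x ∈ {x : Fin n → ℝ | (∀ i, 0 ≤ x i ∧ x i ≤ 1) ∧ ∑ i, x i = 1},
      ∀ j : Fin n, (∀ k, k ≠ j → x k = 0) →
      x = fun i => if i = j then (1 : ℝ) else 0 := by
    intro x hx j hk
    obtain ⟨hx1, hx2⟩ := hx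
    have hxj : x j = 1 := by
      rw [← hx2, Finset.sum_eq_single j (fun b _ hb => hk b hb) (by simp)]
    funext i
    by_cases h : i = j
    · simp [h, hxj]
    · simp [h, hk i h]
  have hMeq : ∀ (p : Fin n → ℝ) (j : Fin n), (∀ k, k ≠ j → p k < p j) →
      M p = {fun i => if i = j then (1 : ℝ) else 0} := by
    intro p j hj
    have hle : ∀ i, p i ≤ p j := by
      intro i
      by_cases h : i = j
      · simp [h]
      · exact (hj i h).le
    apply Set.eq_singleton_iff_unique_mem.mpr
    refine ⟨hmemM p j hle, fun x hx => ?_⟩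
    have hxs : x ∈ {x : Fin n → ℝ | (∀ i, 0 ≤ x i ∧ x i ≤ 1) ∧ ∑ i, x i = 1} := by
      rw [hM] at hx; exact hx.1
    exact hext x hxs j fun k hk => hzero p j hle x hx k (hj k hk)
  refine ⟨?_, ?_, ?_⟩
  · -- middle range of q
    intro q hq1 hq2
    have hq2' : q * (β iN - β istar) ≤ ρ := (le_div_iff₀ (by linarith)).mp hq2
    have hq1' : -q * (β istar - β i0) ≤ ρ :=
      (le_div_iff₀ (by linarith)).mp (by linarith)
    have hkey : ∀ i, q * β i + r i ≤ q * β istar + r istar := by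
      intro i
      rw [hr i, hr istar, if_pos rfl]
      by_cases h : i = istar
      · simp [h]
      · rw [if_neg h]
        have ha := hmono0 i
        have hb := hmonoN i
        rcases le_total q 0 with hq | hq
        · nlinarith [mul_nonneg (neg_nonneg.2 hq) (sub_nonneg.2 ha)]
        · nlinarith [mul_nonneg hq (sub_nonneg.2 hb)]
    refine ⟨hmemM _ istar hkey, hval β istar, ?_⟩
    intro x hx hsum
    have hxs : x ∈ {x : Fin n → ℝ | (∀ i, 0 ≤ x i ∧ x i ≤ 1) ∧ ∑ i, x i = 1} := by
      rw [hM] at hx; exact hx.1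
    obtain ⟨hx1, hx2⟩ := hxs
    have hzero' : ∀ k, q * β k + r k < q * β istar + r istar → x k = 0 :=
      fun k hk => hzero _ istar hkey x hx k hk
    have hfnn : ∀ i ∈ Finset.univ, 0 ≤ q * (β i - β istar) * x i := by
      intro i _
      by_cases hxi : x i = 0
      · simp [hxi]
      · by_cases h : i = istar
        · simp [h]
        · have hnl : ¬ q * β i + r i < q * β istar + r istar :=
            fun hc => hxi (hzero' i hc)
          have hpe : q * β i + r i = q * β istar + r istar :=
            le_antisymm (hkey i) (not_lt.mp hnl)
          rw [hr i, hr istar, if_neg h, if_pos rfl] at hpe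
          have hq : q * (β i - β istar) = ρ := by linarith
          rw [hq]
          exact mul_nonneg hρpos.le (hx1 i).1
    have hsum0 : ∑ i, q * (β i - β istar) * x i = 0 := by
      rw [Finset.sum_congr rfl (fun i _ => show q * (β i - β istar) * x i =
          q * (β i * x i) - q * β istar * x i by ring),
        Finset.sum_sub_distrib, ← Finset.mul_sum, ← Finset.mul_sum, hsum, hx2]
      ring
    have hall := (Finset.sum_eq_zero_iff_of_nonneg hfnn).mp hsum0
    apply hext x ⟨hx1, hx2⟩ istar
    intro k hk
    by_cases hlt : q * β k + r k < q * β istar + r istar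
    · exact hzero' k hlt
    · have hpe : q * β k + r k = q * β istar + r istar :=
        le_antisymm (hkey k) (not_lt.mp hlt)
      rw [hr k, hr istar, if_neg hk, if_pos rfl] at hpe
      have hqk : q * (β k - β istar) = ρ := by linarith
      have hzk := hall k (Finset.mem_univ k)
      rw [hqk] at hzk
      rcases mul_eq_zero.mp hzk with h | h
      · linarith
      · exact h
  · -- large q
    intro q hq
    have hq' : ρ < q * (β iN - β istar) := by
      rw [div_lt_iff₀ (by linarith)] at hq; linarith
    have hqpos : 0 < q := by
      by_contra h
      push_neg at h
      nlinarith [mul_nonneg (neg_nonneg.2 h) (sub_nonneg.2 hbN.le)]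
    apply hMeq
    intro k hk
    rw [hr k, hr iN, if_neg hltN.ne']
    by_cases h : k = istar
    · rw [if_pos h, h]
      linarith
    · rw [if_neg h]
      have hklt : β k < β iN := by
        apply hβ
        rw [Fin.lt_def]
        have := k.isLt
        have : k.val ≠ n - 1 := fun hc => hk (by rw [hiNdef]; exact Fin.ext hc)
        simp [hiNdef]
        omega
      nlinarith [mul_pos hqpos (sub_pos.2 hklt)]
  · -- small q
    intro q hq
    have hq' : ρ < -q * (β istar - β i0) :=
      (div_lt_iff₀ (by linarith)).mp (by linarith)
    have hqneg : q < 0 := by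
      by_contra h
      push_neg at h
      nlinarith [mul_nonneg h (sub_nonneg.2 hb0.le)]
    apply hMeq
    intro k hk
    rw [hr k, hr i0, if_neg hlt0.ne]
    by_cases h : k = istar
    · rw [if_pos h, h]
      linarith
    · rw [if_neg h]
      have hklt : β i0 < β k := by
        apply hβ
        rw [Fin.lt_def]
        have : k.val ≠ 0 := fun hc => hk (by rw [hi0def]; exact Fin.ext hc)
        simp [hi0def]
        omega
      nlinarith [mul_pos (neg_pos.2 hqneg) (sub_pos.2 hklt)]
end

section
/- In Case I, let x* have support {i*, i*+1} (as the unique minimizer described above) and let r° := r* - c where r*_i = c̃_i - ρ* for i outside the support and r*_i = c̃_i on the support (ρ* > 0 arbitrary). Then: (a) if q = 0, the set {x ∈ M(r°) : β'x = β*} equals {x*}; (b) if q > 0, every x ∈ M(qβ + r°) satisfies x_1 = ... = x_{i*} = 0 and hence β'x > β*; (c) if q < 0, every x ∈ M(qβ + r°) satisfies β'x < β*. -/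
open Finset

lemma stmt9_mono (n : ℕ) (β : ℕ → ℝ) (h : ∀ i, i + 1 < n → β i < β (i + 1)) :
    ∀ i j, i < j → j < n → β i < β j := by
  intro i j hij hjn
  induction j with
  | zero => omega
  | succ k ih =>
    rcases Nat.lt_succ_iff_lt_or_eq.mp hij with h1 | h1
    · exact (ih h1 (by omega)).trans (h k hjn)
    · subst h1; exact h i hjn

lemma stmt9_maxzero (n : ℕ) (p x : Fin n → ℝ)
    (hx0 : ∀ i, 0 ≤ x i) (hxs : ∑ i, x i = 1)
    (hmax : ∀ y : Fin n → ℝ, (∀ i, 0 ≤ y i ∧ y i ≤ 1) → ∑ i, y i = 1 →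
      ∑ i, p i * y i ≤ ∑ i, p i * x i)
    (j k : Fin n) (h : p k < p j) : x k = 0 := by
  by_contra hk
  have hk' : 0 < x k := lt_of_le_of_ne (hx0 k) (Ne.symm hk)
  obtain ⟨m, _, hm⟩ := Finset.exists_max_image (univ : Finset (Fin n)) p ⟨j, mem_univ j⟩
  have hjm : p j ≤ p m := hm j (mem_univ j)
  have hem : ∑ i, p i * (fun i => if i = m then (1:ℝ) else 0) i ≤ ∑ i, p i * x i := by
    apply hmax
    · intro i; by_cases hi : i = m <;> simp [hi]
    · simp
  have hval : ∑ i, p i * (fun i => if i = m then (1:ℝ) else 0) i = p m := by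
    simp [mul_ite]
  have hem' : p m ≤ ∑ i, p i * x i := by rw [hval] at hem; exact hem
  have hlt : ∑ i, p i * x i < ∑ i, p m * x i := by
    apply Finset.sum_lt_sum
    · intro i _; exact mul_le_mul_of_nonneg_right (hm i (mem_univ i)) (hx0 i)
    · exact ⟨k, mem_univ k,
        mul_lt_mul_of_pos_right (lt_of_lt_of_le h hjm) hk'⟩
  have heq : ∑ i, p m * x i = p m := by rw [← Finset.mul_sum, hxs, mul_one]
  linarith

/-- Case I best-response characterization (a), (b), (c). -/
theorem stmt9 (n : ℕ) (hn : 2 ≤ n) (β c : ℕ → ℝ)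
    (hβpos : 0 < β 0)
    (hβmono : ∀ i, i + 1 < n → β i < β (i + 1))
    (hcmono : ∀ i, i + 1 < n → c (i + 1) < c i)
    (hcn : 0 ≤ c (n - 1))
    (cstar : ℝ) (istar : ℕ) (histar : istar + 1 < n)
    (hlt : c (istar + 1) - c (n - 1) < cstar)
    (hgt : cstar < c istar - c (n - 1))
    (xstar : Fin n → ℝ)
    (hxstar : ∀ i : Fin n, xstar i =
      if i.val = istar then
        (cstar - (c (istar + 1) - c (n - 1))) /
          ((c istar - c (n - 1)) - (c (istar + 1) - c (n - 1)))
      else if i.val = istar + 1 then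
        1 - (cstar - (c (istar + 1) - c (n - 1))) /
          ((c istar - c (n - 1)) - (c (istar + 1) - c (n - 1)))
      else 0)
    (βstar : ℝ) (hβstar : βstar = ∑ i : Fin n, β i.val * xstar i)
    (ρ : ℝ) (hρ : 0 < ρ)
    (r : Fin n → ℝ)
    (hr : ∀ i : Fin n, r i = if i.val = istar ∨ i.val = istar + 1 then 0 else -ρ)
    (simplex : Set (Fin n → ℝ))
    (hsimplex : simplex = {x | (∀ i, 0 ≤ x i ∧ x i ≤ 1) ∧ ∑ i, x i = 1})
    (M : (Fin n → ℝ) → Set (Fin n → ℝ))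
    (hM : ∀ p, M p = {x ∈ simplex | ∀ y ∈ simplex,
      ∑ i, p i * y i ≤ ∑ i, p i * x i}) :
    -- (a) q = 0
    ({x ∈ M r | ∑ i, β i.val * x i = βstar} = {xstar}) ∧
    -- (b) q > 0
    (∀ q : ℝ, 0 < q → ∀ x ∈ M (fun i => q * β i.val + r i),
      (∀ i : Fin n, i.val ≤ istar → x i = 0) ∧ βstar < ∑ i, β i.val * x i) ∧
    -- (c) q < 0
    (∀ q : ℝ, q < 0 → ∀ x ∈ M (fun i => q * β i.val + r i),
      ∑ i, β i.val * x i < βstar) := by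
  -- setup
  set t : ℝ := (cstar - (c (istar + 1) - c (n - 1))) /
      ((c istar - c (n - 1)) - (c (istar + 1) - c (n - 1))) with ht_def
  have hden : (0:ℝ) < (c istar - c (n - 1)) - (c (istar + 1) - c (n - 1)) := by
    have := hcmono istar histar; linarith
  have ht0 : 0 < t := div_pos (by linarith) hden
  have ht1 : t < 1 := by
    rw [ht_def, div_lt_one hden]; linarith
  set I : Fin n := ⟨istar, by omega⟩ with hI_def
  set J : Fin n := ⟨istar + 1, histar⟩ with hJ_def
  have hIJ : I ≠ J := by simp [hI_def, hJ_def, Fin.ext_iff]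
  have hxI : xstar I = t := by rw [hxstar]; simp [hI_def]
  have hxJ : xstar J = 1 - t := by rw [hxstar]; simp [hJ_def]
  have hxo : ∀ i : Fin n, i ≠ I → i ≠ J → xstar i = 0 := by
    intro i hi1 hi2
    rw [hxstar]
    have h1 : ¬ i.val = istar := fun h => hi1 (by simp [hI_def, Fin.ext_iff, h])
    have h2 : ¬ i.val = istar + 1 := fun h => hi2 (by simp [hJ_def, Fin.ext_iff, h])
    simp [h1, h2]
  -- sum over two-element support
  have hsum2 : ∀ (f x : Fin n → ℝ), (∀ i : Fin n, i ≠ I → i ≠ J → x i = 0) →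
      ∑ i, f i * x i = f I * x I + f J * x J := by
    intro f x hx
    rw [← Finset.sum_subset (Finset.subset_univ ({I, J} : Finset (Fin n)))]
    · rw [Finset.sum_pair hIJ]
    · intro i _ hi
      simp only [Finset.mem_insert, Finset.mem_singleton, not_or] at hi
      rw [hx i hi.1 hi.2, mul_zero]
  have hβIJ : β I.val < β J.val := hβmono istar histar
  have hβstar' : βstar = β istar * t + β (istar + 1) * (1 - t) := by
    rw [hβstar, hsum2 (fun i => β i.val) xstar hxo, hxI, hxJ]
  have hβstarI : β istar < βstar := by nlinarith
  have hβstarJ : βstar < β (istar + 1) := by nlinarith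
  -- xstar in simplex data
  have hxstar_nonneg : ∀ i : Fin n, 0 ≤ xstar i ∧ xstar i ≤ 1 := by
    intro i
    by_cases h1 : i = I
    · subst h1; rw [hxI]; constructor <;> linarith
    · by_cases h2 : i = J
      · subst h2; rw [hxJ]; constructor <;> linarith
      · rw [hxo i h1 h2]; norm_num
  have hxstar_sum : ∑ i, xstar i = 1 := by
    have := hsum2 (fun _ => (1:ℝ)) xstar hxo
    simp only [one_mul] at this
    rw [this, hxI, hxJ]; ring
  have hxstar_simplex : xstar ∈ simplex := by
    rw [hsimplex]; exact ⟨hxstar_nonneg, hxstar_sum⟩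
  -- r values
  have hrI : r I = 0 := by rw [hr]; simp [hI_def]
  have hrJ : r J = 0 := by rw [hr]; simp [hJ_def]
  have hro : ∀ i : Fin n, i ≠ I → i ≠ J → r i = -ρ := by
    intro i h1 h2
    rw [hr]
    have h1' : ¬ i.val = istar := fun h => h1 (by simp [hI_def, Fin.ext_iff, h])
    have h2' : ¬ i.val = istar + 1 := fun h => h2 (by simp [hJ_def, Fin.ext_iff, h])
    simp [h1', h2']
  refine ⟨?_, ?_, ?_⟩
  -- (a)
  · ext x
    simp only [Set.mem_setOf_eq, Set.mem_singleton_iff]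
    constructor
    · rintro ⟨hxM, hxβ⟩
      rw [hM, hsimplex] at hxM
      obtain ⟨⟨hx01, hxs⟩, hmax⟩ := hxM
      have hmax' : ∀ y : Fin n → ℝ, (∀ i, 0 ≤ y i ∧ y i ≤ 1) → ∑ i, y i = 1 →
          ∑ i, r i * y i ≤ ∑ i, r i * x i := by
        intro y h1 h2
        exact hmax y ⟨h1, h2⟩
      have hzero : ∀ i : Fin n, i ≠ I → i ≠ J → x i = 0 := by
        intro i h1 h2
        exact stmt9_maxzero n r x (fun i => (hx01 i).1) hxs hmax' I i
          (by rw [hrI, hro i h1 h2]; linarith)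
      have hxsum2 : x I + x J = 1 := by
        have := hsum2 (fun _ => (1:ℝ)) x hzero
        simp only [one_mul] at this
        rw [← hxs, this]
      have hβx : β I.val * x I + β J.val * x J = βstar := by
        rw [← hsum2 (fun i => β i.val) x hzero]; exact hxβ
      have hxIt : x I = t := by
        have hβx' : β istar * x I + β (istar + 1) * (1 - x I) = βstar := by
          have : x J = 1 - x I := by linarith
          rw [← this]; exact hβx
        have hne : β istar ≠ β (istar + 1) := ne_of_lt hβIJ
        have key : (β istar - β (istar + 1)) * (x I - t) = 0 := by
          rw [hβstar'] at hβx'; linear_combination hβx'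
        rcases mul_eq_zero.mp key with h | h
        · exact absurd (by linarith : β istar = β (istar + 1)) hne
        · linarith
      funext i
      by_cases h1 : i = I
      · subst h1; rw [hxIt, hxI]
      · by_cases h2 : i = J
        · subst h2; rw [hxJ]; linarith [hxsum2, hxIt]
        · rw [hzero i h1 h2, hxo i h1 h2]
    · intro hx
      rw [hx]
      refine ⟨?_, hβstar.symm⟩
      rw [hM]
      refine ⟨hxstar_simplex, ?_⟩
      intro y hy
      rw [hsimplex] at hy
      obtain ⟨hy01, hys⟩ := hy
      have h1 : ∑ i, r i * xstar i = 0 := by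
        rw [hsum2 r xstar hxo, hrI, hrJ]; ring
      have h2 : ∑ i, r i * y i ≤ 0 := by
        apply Finset.sum_nonpos
        intro i _
        by_cases hi1 : i = I
        · subst hi1; rw [hrI]; simp
        · by_cases hi2 : i = J
          · subst hi2; rw [hrJ]; simp
          · rw [hro i hi1 hi2]
            have := (hy01 i).1; nlinarith
      rw [h1]; exact h2
  -- (b)
  · intro q hq x hxM
    rw [hM, hsimplex] at hxM
    obtain ⟨⟨hx01, hxs⟩, hmax⟩ := hxM
    have hmax' : ∀ y : Fin n → ℝ, (∀ i, 0 ≤ y i ∧ y i ≤ 1) → ∑ i, y i = 1 →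
        ∑ i, (q * β i.val + r i) * y i ≤ ∑ i, (q * β i.val + r i) * x i := by
      intro y h1 h2
      exact hmax y ⟨h1, h2⟩
    have hzero : ∀ i : Fin n, i.val ≤ istar → x i = 0 := by
      intro i hi
      apply stmt9_maxzero n _ x (fun i => (hx01 i).1) hxs hmax' J i
      have hβi : β i.val < β J.val := by
        rcases Nat.lt_or_ge i.val istar with h | h
        · exact stmt9_mono n β hβmono i.val (istar + 1) (by omega) histar
        · have : i.val = istar := le_antisymm hi h
          rw [this]; exact hβIJ
      have hri : r i ≤ 0 := by
        rw [hr]; split <;> [exact le_refl 0; linarith]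
      rw [hrJ]
      have : q * β i.val < q * β J.val := by nlinarith
      linarith
    refine ⟨hzero, ?_⟩
    have hge : β J.val * 1 ≤ ∑ i, β i.val * x i := by
      rw [← hxs, Finset.mul_sum]
      apply Finset.sum_le_sum
      intro i _
      rcases Nat.lt_or_ge istar i.val with h | h
      · have hβi : β J.val ≤ β i.val := by
          rcases Nat.lt_or_ge (istar + 1) i.val with h' | h'
          · exact le_of_lt (stmt9_mono n β hβmono (istar + 1) i.val h' i.isLt)
          · have : i.val = istar + 1 := by omega
            rw [this]
        exact mul_le_mul_of_nonneg_right hβi (hx01 i).1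
      · rw [hzero i h]; simp
    simp only [mul_one] at hge
    calc βstar < β J.val := hβstarJ
      _ ≤ ∑ i, β i.val * x i := hge
  -- (c)
  · intro q hq x hxM
    rw [hM, hsimplex] at hxM
    obtain ⟨⟨hx01, hxs⟩, hmax⟩ := hxM
    have hmax' : ∀ y : Fin n → ℝ, (∀ i, 0 ≤ y i ∧ y i ≤ 1) → ∑ i, y i = 1 →
        ∑ i, (q * β i.val + r i) * y i ≤ ∑ i, (q * β i.val + r i) * x i := by
      intro y h1 h2
      exact hmax y ⟨h1, h2⟩
    have hzero : ∀ i : Fin n, istar < i.val → x i = 0 := by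
      intro i hi
      apply stmt9_maxzero n _ x (fun i => (hx01 i).1) hxs hmax' I i
      have hβi : β I.val < β i.val := by
        rcases Nat.lt_or_ge (istar + 1) i.val with h | h
        · exact (hβIJ.trans (stmt9_mono n β hβmono (istar + 1) i.val h i.isLt))
        · have : i.val = istar + 1 := by omega
          rw [this]; exact hβIJ
      have hri : r i ≤ 0 := by
        rw [hr]; split <;> [exact le_refl 0; linarith]
      rw [hrI]
      have : q * β i.val < q * β I.val := by nlinarith
      linarith
    have hle : ∑ i, β i.val * x i ≤ β I.val * 1 := by
      rw [← hxs, Finset.mul_sum]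
      apply Finset.sum_le_sum
      intro i _
      rcases Nat.lt_or_ge istar i.val with h | h
      · rw [hzero i h]; simp
      · have hβi : β i.val ≤ β I.val := by
          rcases Nat.lt_or_ge i.val istar with h' | h'
          · exact le_of_lt (stmt9_mono n β hβmono i.val istar h' (by omega))
          · have : i.val = istar := by omega
            rw [this]
        exact mul_le_mul_of_nonneg_right hβi (hx01 i).1
    simp only [mul_one] at hle
    calc ∑ i, β i.val * x i ≤ β I.val := hle
      _ < βstar := hβstarI
end

section
/- Smith's protocol T_{ij}(x, p) = min{λ·[p_j - p_i]_+, T̄} (with λ, T̄ > 0) satisfies Nash stationarity: for all x ∈ 𝕏 and p ∈ ℝ^n, the mean dynamics vector field V_i(x,p) = Σ_{j≠i} x_j T_{ji}(x,p) - Σ_{j≠i} x_i T_{ij}(x,p) vanishes (V(x,p) = 0) if and only if x ∈ argmax_{y∈𝕏} p'y. -/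
open Finset

/-- Smith's protocol satisfies Nash stationarity. -/
theorem stmt11 (n : ℕ) (hn : 1 ≤ n) (lam Tbar : ℝ) (hlam : 0 < lam) (hT : 0 < Tbar)
    (T : (Fin n → ℝ) → Fin n → Fin n → ℝ)
    (hT' : ∀ p i j, T p i j = min (lam * max (p j - p i) 0) Tbar)
    (V : (Fin n → ℝ) → (Fin n → ℝ) → Fin n → ℝ)
    (hV : ∀ x p i, V x p i =
      (∑ j ∈ univ.erase i, x j * T p j i) - (∑ j ∈ univ.erase i, x i * T p i j)) :
    ∀ x : Fin n → ℝ, ((∀ i, 0 ≤ x i ∧ x i ≤ 1) ∧ ∑ i, x i = 1) →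
      ∀ p : Fin n → ℝ,
        ((∀ i, V x p i = 0) ↔
          (∀ y : Fin n → ℝ, ((∀ i, 0 ≤ y i ∧ y i ≤ 1) ∧ ∑ i, y i = 1) →
            ∑ i, p i * y i ≤ ∑ i, p i * x i)) := by
  rintro x ⟨hx01, hxsum⟩ p
  have hTnn : ∀ i j, 0 ≤ T p i j := by
    intro i j; rw [hT']
    exact le_min (mul_nonneg hlam.le (le_max_right _ _)) hT.le
  have hTzero : ∀ i j, p j ≤ p i → T p i j = 0 := by
    intro i j h; rw [hT', max_eq_right (by linarith), mul_zero, min_eq_left hT.le]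
  have hTpos : ∀ i j, p i < p j → 0 < T p i j := by
    intro i j h
    have hm : max (p j - p i) 0 = p j - p i := max_eq_left (by linarith)
    rw [hT', hm]
    exact lt_min (mul_pos hlam (by linarith)) hT
  have key : (∀ i, V x p i = 0) ↔ (∀ i, 0 < x i → ∀ j, p j ≤ p i) := by
    constructor
    · -- V = 0 → support maximal
      intro hV0
      by_contra hnQ
      push_neg at hnQ
      obtain ⟨i₁, hx1, j₁, hpj⟩ := hnQ
      have hS : (univ.filter (fun i => 0 < x i)).Nonempty := ⟨i₁, by simp [hx1]⟩
      obtain ⟨i₀, hi₀mem, hi₀min⟩ := Finset.exists_min_image _ p hS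
      have hx0 : 0 < x i₀ := (Finset.mem_filter.mp hi₀mem).2
      have hp01 : p i₀ ≤ p i₁ := hi₀min i₁ (by simp [hx1])
      have hpj0 : p i₀ < p j₁ := lt_of_le_of_lt hp01 hpj
      have hne : j₁ ≠ i₀ := by rintro rfl; exact lt_irrefl _ hpj0
      have h1 : ∑ j ∈ univ.erase i₀, x j * T p j i₀ = 0 := by
        apply Finset.sum_eq_zero
        intro j _
        rcases eq_or_lt_of_le (hx01 j).1 with h | h
        · rw [← h, zero_mul]
        · rw [hTzero j i₀ (hi₀min j (by simp [h])), mul_zero]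
      have h2 : 0 < ∑ j ∈ univ.erase i₀, x i₀ * T p i₀ j := by
        apply Finset.sum_pos'
        · intro j _; exact mul_nonneg hx0.le (hTnn i₀ j)
        · exact ⟨j₁, Finset.mem_erase.mpr ⟨hne, mem_univ _⟩,
            mul_pos hx0 (hTpos i₀ j₁ hpj0)⟩
      have hv := hV0 i₀
      rw [hV, h1] at hv
      linarith
    · -- support maximal → V = 0
      intro hQ i
      rw [hV]
      have h1 : ∑ j ∈ univ.erase i, x j * T p j i = 0 := by
        apply Finset.sum_eq_zero
        intro j _
        rcases eq_or_lt_of_le (hx01 j).1 with h | h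
        · rw [← h, zero_mul]
        · rw [hTzero j i (hQ j h i), mul_zero]
      have h2 : ∑ j ∈ univ.erase i, x i * T p i j = 0 := by
        apply Finset.sum_eq_zero
        intro j _
        rcases eq_or_lt_of_le (hx01 i).1 with h | h
        · rw [← h, zero_mul]
        · rw [hTzero i j (hQ i h j), mul_zero]
      rw [h1, h2, sub_zero]
  have key2 : (∀ i, 0 < x i → ∀ j, p j ≤ p i) ↔
      (∀ y : Fin n → ℝ, ((∀ i, 0 ≤ y i ∧ y i ≤ 1) ∧ ∑ i, y i = 1) →
        ∑ i, p i * y i ≤ ∑ i, p i * x i) := by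
    constructor
    · rintro hQ y ⟨hy01, hysum⟩
      have hne : Nonempty (Fin n) := ⟨⟨0, hn⟩⟩
      obtain ⟨k, -, hk⟩ := Finset.exists_max_image univ p univ_nonempty
      have h1 : ∑ i, p i * y i ≤ p k := by
        calc ∑ i, p i * y i ≤ ∑ i, p k * y i :=
              Finset.sum_le_sum (fun i _ =>
                mul_le_mul_of_nonneg_right (hk i (mem_univ i)) (hy01 i).1)
          _ = p k := by rw [← Finset.mul_sum, hysum, mul_one]
      have h2 : ∑ i, p i * x i = p k := by
        have hc : ∀ i ∈ univ, p i * x i = p k * x i := by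
          intro i _
          rcases eq_or_lt_of_le (hx01 i).1 with h | h
          · rw [← h, mul_zero, mul_zero]
          · rw [le_antisymm (hk i (mem_univ i)) (hQ i h k)]
        rw [Finset.sum_congr rfl hc, ← Finset.mul_sum, hxsum, mul_one]
      linarith
    · intro hmax
      intro i hxi j
      by_contra hpij
      push_neg at hpij
      have hij : i ≠ j := by rintro rfl; exact lt_irrefl _ hpij
      set y : Fin n → ℝ := fun k =>
        x k + x i * ((if k = j then (1:ℝ) else 0) - (if k = i then 1 else 0)) with hy
      have hsite : ∀ a : Fin n, ∑ k, (if k = a then (1:ℝ) else 0) = 1 := by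
        intro a; simp
      have hysum : ∑ k, y k = 1 := by
        rw [hy]
        rw [Finset.sum_add_distrib, ← Finset.mul_sum, Finset.sum_sub_distrib,
          hsite j, hsite i, hxsum]
        ring
      have hy0 : ∀ k, 0 ≤ y k := by
        intro k
        by_cases hk : k = i
        · subst hk
          have : y k = 0 := by simp [hy, hij]
          rw [this]
        · by_cases hk' : k = j
          · subst hk'
            have : y k = x k + x i := by simp [hy, hk]
            rw [this]; exact add_nonneg (hx01 k).1 (hx01 i).1
          · have : y k = x k := by simp [hy, hk, hk']
            rw [this]; exact (hx01 k).1
      have hy1 : ∀ k, y k ≤ 1 := by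
        intro k
        calc y k ≤ ∑ a, y a := Finset.single_le_sum (fun a _ => hy0 a) (mem_univ k)
          _ = 1 := hysum
      have hpy : ∑ k, p k * y k = (∑ k, p k * x k) + x i * (p j - p i) := by
        rw [hy]
        have : ∀ k ∈ univ, p k * (x k + x i * ((if k = j then (1:ℝ) else 0) - (if k = i then 1 else 0)))
            = p k * x k + x i * ((if k = j then p k else 0) - (if k = i then p k else 0)) := by
          intro k _
          by_cases hk : k = j <;> by_cases hk' : k = i <;> simp [hk, hk', hij, hij.symm] <;> ring
        rw [Finset.sum_congr rfl this, Finset.sum_add_distrib, ← Finset.mul_sum,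
          Finset.sum_sub_distrib]
        simp
      have hle := hmax y ⟨fun k => ⟨hy0 k, hy1 k⟩, hysum⟩
      rw [hpy] at hle
      nlinarith
  exact key.trans key2
end

section
/- (Proposition 1(ii)) Let n = 2, β_1 < β_2, σ > 0 with β_1 > σ, η ∈ (0,1), β* ∈ (β_1, β_2), β° ∈ [β_1, β_2] with β° ≠ β*, and β̄ := min{|β° - β*| + β*, β_2}. Then the optimal value π*_υ(½υ²(β° - β*)²) := (1/I*)·sup{ 𝒾/𝒷 : sS(𝒾,𝓇,𝒷) ≤ ½υ²(β° - β*)², β_1 ≤ 𝒷 ≤ β_2, 0 < 𝒾 ≤ 𝒷, 0 ≤ 𝓇 ≤ 𝒷 - 𝒾 } satisfies π*_υ(½υ²(β° - β*)²) ≥ (1/I*)·η(1 - σ/β̄) > 1, where I* = η(1 - σ/β*). -/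
/-- Proposition 1(ii). -/
theorem stmt14 (γ υ η σ β₁ β₂ βstar βo : ℝ)
    (hγ : 0 < γ) (hυ : 0 < υ) (hη₀ : 0 < η) (hη₁ : η < 1)
    (hσ : 0 < σ) (hσβ₁ : σ < β₁) (hβ₁₂ : β₁ < β₂)
    (hβstar : β₁ < βstar ∧ βstar < β₂)
    (hβo : β₁ ≤ βo ∧ βo ≤ β₂) (hne : βo ≠ βstar)
    (βbar : ℝ) (hβbar : βbar = min (|βo - βstar| + βstar) β₂)
    (Istar : ℝ) (hIstar : Istar = η * (1 - σ / βstar))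
    (sS : ℝ → ℝ → ℝ → ℝ)
    (hsS : ∀ i r b, sS i r b =
      (i - η * (b - σ)) + η * (b - σ) * Real.log (η * (b - σ) / i) +
      (1 / (2 * γ)) * (r - (1 - η) * (b - σ))^2 + (υ^2 / 2) * (b - βstar)^2)
    (π : ℝ)
    (hπ : π = (1 / Istar) * sSup {v : ℝ | ∃ i r b : ℝ,
      β₁ ≤ b ∧ b ≤ β₂ ∧ 0 < i ∧ i ≤ b ∧ 0 ≤ r ∧ r ≤ b - i ∧
      sS i r b ≤ υ^2 / 2 * (βo - βstar)^2 ∧ v = i / b}) :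
    (1 / Istar) * (η * (1 - σ / βbar)) ≤ π ∧
    1 < (1 / Istar) * (η * (1 - σ / βbar)) := by
  obtain ⟨hβs₁, hβs₂⟩ := hβstar
  have habs : 0 < |βo - βstar| := abs_pos.mpr (sub_ne_zero.mpr hne)
  have hβbar_gt : βstar < βbar := by
    rw [hβbar]; exact lt_min (by linarith) hβs₂
  have hβbar_le : βbar ≤ β₂ := by rw [hβbar]; exact min_le_right _ _
  have hβbar_ge : β₁ ≤ βbar := le_of_lt (lt_trans hβs₁ hβbar_gt)
  have hσβbar : σ < βbar := lt_of_lt_of_le hσβ₁ hβbar_ge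
  have hβbarpos : 0 < βbar := lt_trans hσ hσβbar
  have hβstarpos : 0 < βstar := lt_trans hσ (lt_trans hσβ₁ hβs₁)
  have hIstarpos : 0 < Istar := by
    rw [hIstar]
    have h1 : 0 < 1 - σ / βstar := by
      have : σ / βstar < 1 := (div_lt_one hβstarpos).mpr (lt_trans hσβ₁ hβs₁)
      linarith
    exact mul_pos hη₀ h1
  -- bound on |βbar - βstar|
  have hdiff : βbar - βstar ≤ |βo - βstar| := by
    rw [hβbar]
    have := min_le_left (|βo - βstar| + βstar) β₂
    linarith
  -- feasible point
  set i₀ := η * (βbar - σ) with hi₀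
  set r₀ := (1 - η) * (βbar - σ) with hr₀
  have hi₀pos : 0 < i₀ := by rw [hi₀]; exact mul_pos hη₀ (by linarith)
  have hmem : η * (1 - σ / βbar) ∈ {v : ℝ | ∃ i r b : ℝ,
      β₁ ≤ b ∧ b ≤ β₂ ∧ 0 < i ∧ i ≤ b ∧ 0 ≤ r ∧ r ≤ b - i ∧
      sS i r b ≤ υ^2 / 2 * (βo - βstar)^2 ∧ v = i / b} := by
    refine ⟨i₀, r₀, βbar, hβbar_ge, hβbar_le, hi₀pos, ?_, ?_, ?_, ?_, ?_⟩
    · rw [hi₀]; nlinarith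
    · rw [hr₀]; nlinarith
    · rw [hi₀, hr₀]; nlinarith
    · rw [hsS, hi₀, hr₀]
      have hlog : Real.log (η * (βbar - σ) / (η * (βbar - σ))) = 0 := by
        rw [div_self (ne_of_gt (mul_pos hη₀ (by linarith : (0:ℝ) < βbar - σ)))]
        exact Real.log_one
      rw [hlog]
      have key : (βbar - βstar)^2 ≤ (βo - βstar)^2 := by
        have h2 : (βbar - βstar)^2 ≤ |βo - βstar|^2 := by
          nlinarith [sub_nonneg.mpr (le_of_lt hβbar_gt), abs_nonneg (βo - βstar)]
        rwa [sq_abs] at h2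
      nlinarith [sq_nonneg υ]
    · rw [hi₀]
      field_simp
  have hbdd : BddAbove {v : ℝ | ∃ i r b : ℝ,
      β₁ ≤ b ∧ b ≤ β₂ ∧ 0 < i ∧ i ≤ b ∧ 0 ≤ r ∧ r ≤ b - i ∧
      sS i r b ≤ υ^2 / 2 * (βo - βstar)^2 ∧ v = i / b} := by
    refine ⟨1, ?_⟩
    rintro v ⟨i, r, b, hb₁, hb₂, hi, hib, _, _, _, rfl⟩
    exact (div_le_one (lt_of_lt_of_le (lt_trans hσ hσβ₁) hb₁)).mpr hib
  constructor
  · rw [hπ]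
    exact mul_le_mul_of_nonneg_left (le_csSup hbdd hmem)
      (le_of_lt (by positivity : (0:ℝ) < 1 / Istar))
  · have hdd : σ / βbar < σ / βstar := div_lt_div_of_pos_left hσ hβstarpos hβbar_gt
    have hIb : Istar < η * (1 - σ / βbar) := by
      rw [hIstar]
      exact mul_lt_mul_of_pos_left (by linarith) hη₀
    rw [one_div, inv_mul_eq_div]
    exact (one_lt_div hIstarpos).mpr hIb
end

section
/- Let q ↦ q^SAT := max{-q^MIN, min{q, q^MAX}} be the saturation of q, where for Smith's protocol with slope λ and cap T̄, one takes q^MAX = q^MIN = (T̄/λ + ρ)/min_{i≠j}|β_i - β_j| for ρ := max_i |r°_i|. Then for all q ∈ ℝ and x ∈ 𝕏, the Smith mean-dynamics vector field satisfies V(x, qβ + r°) = V(x, q^SAT β + r°). -/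
open Finset

lemma tval_eq (lam Tbar : ℝ) (hT : 0 < Tbar) (s t : ℝ)
    (h : (Tbar / lam ≤ s ∧ Tbar / lam ≤ t) ∨ (s ≤ 0 ∧ t ≤ 0)) (hlam : 0 < lam) :
    min (lam * max s 0) Tbar = min (lam * max t 0) Tbar := by
  rcases h with ⟨hs, ht⟩ | ⟨hs, ht⟩
  · have hs' : Tbar ≤ lam * max s 0 := by
      rw [max_eq_left (le_trans (by positivity) hs)]
      calc Tbar = lam * (Tbar / lam) := by field_simp
        _ ≤ lam * s := by nlinarith
    have ht' : Tbar ≤ lam * max t 0 := by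
      rw [max_eq_left (le_trans (by positivity) ht)]
      calc Tbar = lam * (Tbar / lam) := by field_simp
        _ ≤ lam * t := by nlinarith
    rw [min_eq_right hs', min_eq_right ht']
  · rw [max_eq_right hs, max_eq_right ht]

/-- saturating q does not change the Smith mean dynamics. -/
theorem stmt17 (n : ℕ) (hn : 2 ≤ n) (lam Tbar ρ m : ℝ)
    (hlam : 0 < lam) (hT : 0 < Tbar) (hm : 0 < m)
    (β r : Fin n → ℝ)
    (hβ : Function.Injective β)
    (hmβ : ∀ i j : Fin n, i ≠ j → m ≤ |β i - β j|)
    (hρ : ∀ i j : Fin n, |r i - r j| ≤ ρ)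
    (qM : ℝ) (hqM : qM = (Tbar / lam + ρ) / m)
    (T : (Fin n → ℝ) → Fin n → Fin n → ℝ)
    (hT' : ∀ p i j, T p i j = min (lam * max (p j - p i) 0) Tbar)
    (V : (Fin n → ℝ) → (Fin n → ℝ) → Fin n → ℝ)
    (hV : ∀ x p i, V x p i =
      (∑ j ∈ univ.erase i, x j * T p j i) - (∑ j ∈ univ.erase i, x i * T p i j)) :
    ∀ (q : ℝ) (x : Fin n → ℝ), ((∀ i, 0 ≤ x i ∧ x i ≤ 1) ∧ ∑ i, x i = 1) →
      V x (fun i => q * β i + r i) =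
      V x (fun i => (max (-qM) (min q qM)) * β i + r i) := by
  intro q x _
  have hρ0 : 0 ≤ ρ := le_trans (abs_nonneg _) (hρ ⟨0, by omega⟩ ⟨0, by omega⟩)
  have hqMval : qM * m = Tbar / lam + ρ := by rw [hqM]; field_simp
  have hqMpos : 0 < qM := by rw [hqM]; positivity
  set qS := max (-qM) (min q qM) with hqS
  have key : ∀ i j : Fin n,
      T (fun i => q * β i + r i) i j = T (fun i => qS * β i + r i) i j := by
    intro i j
    rcases eq_or_ne i j with rfl | hij
    · rw [hT', hT']
      simp
    · rw [hT', hT']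
      have hd : m ≤ |β j - β i| := hmβ j i (Ne.symm hij)
      have hrij : |r j - r i| ≤ ρ := hρ j i
      have habs := abs_le.mp hrij
      have e1 : (q * β j + r j) - (q * β i + r i) = q * (β j - β i) + (r j - r i) := by ring
      have e2 : (qS * β j + r j) - (qS * β i + r i) = qS * (β j - β i) + (r j - r i) := by
        ring
      rw [e1, e2]
      rcases le_or_gt q qM with h1 | h1
      · rcases le_or_gt (-qM) q with h2 | h2
        · have : qS = q := by rw [hqS, min_eq_left h1, max_eq_right h2]
          rw [this]
        · have hqS' : qS = -qM := by
            rw [hqS, max_eq_left (le_trans (min_le_left _ _) h2.le)]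
          rw [hqS']
          rcases abs_cases (β j - β i) with ⟨he, hsg⟩ | ⟨he, hsg⟩
          · -- β j - β i ≥ m > 0, q < -qM : both ≤ 0
            rw [he] at hd
            apply tval_eq _ _ hT _ _ _ hlam
            right
            have k1 : q * (β j - β i) ≤ -qM * (β j - β i) :=
              mul_le_mul_of_nonneg_right h2.le (by linarith)
            have k2 : qM * m ≤ qM * (β j - β i) :=
              mul_le_mul_of_nonneg_left hd hqMpos.le
            have k3 : 0 < Tbar / lam := div_pos hT hlam
            constructor <;> linarith [habs.2, hqMval, k1, k2]
          · -- β j - β i ≤ -m, q < -qM : both ≥ Tbar/lam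
            rw [he] at hd
            have hd' : β j - β i ≤ -m := by linarith
            apply tval_eq _ _ hT _ _ _ hlam
            left
            have k1 : -qM * (β j - β i) ≤ q * (β j - β i) :=
              mul_le_mul_of_nonpos_right h2.le (by linarith)
            have k2 : -qM * -m ≤ -qM * (β j - β i) :=
              mul_le_mul_of_nonpos_left hd' (by linarith)
            constructor <;> linarith [habs.1, hqMval, k1, k2]
      · have hqS' : qS = qM := by
          rw [hqS, min_eq_right h1.le, max_eq_right (by linarith)]
        rw [hqS']
        rcases abs_cases (β j - β i) with ⟨he, hsg⟩ | ⟨he, hsg⟩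
        · rw [he] at hd
          apply tval_eq _ _ hT _ _ _ hlam
          left
          have k1 : qM * (β j - β i) ≤ q * (β j - β i) :=
            mul_le_mul_of_nonneg_right h1.le (by linarith)
          have k2 : qM * m ≤ qM * (β j - β i) :=
            mul_le_mul_of_nonneg_left hd hqMpos.le
          constructor <;> linarith [habs.1, hqMval, k1, k2]
        · rw [he] at hd
          have hd' : β j - β i ≤ -m := by linarith
          apply tval_eq _ _ hT _ _ _ hlam
          right
          have k1 : q * (β j - β i) ≤ qM * (β j - β i) :=
            mul_le_mul_of_nonpos_right h1.le (by linarith)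
          have k2 : qM * (β j - β i) ≤ qM * -m :=
            mul_le_mul_of_nonneg_left hd' hqMpos.le
          have k3 : 0 < Tbar / lam := div_pos hT hlam
          constructor <;> linarith [habs.2, hqMval, k1, k2]
  funext i
  rw [hV, hV]
  congr 1
  · exact sum_congr rfl fun j _ => by rw [key]
  · exact sum_congr rfl fun j _ => by rw [key]
end
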